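/- arXiv:2008.06379 — 4 statements merged into one kernel-verified Lean document; each statement's English description precedes it below -/
import Mathlib

section
/- Let G be a group with finite generating set A, let H be a subgroup of G, and let H' be a finite-index subgroup of H. Then the exponential growth rate of H with respect to A equals the exponential growth rate of H' with respect to A, i.e., limsup_{n→∞} (f_{H,A}(n))^{1/n} = limsup_{n→∞} (f_{H',A}(n))^{1/n}. -/
open Classical

/-- Evaluation in `G` of a word over the alphabet `A`. -/
def wordEval {G : Type} [Group G] {A : Type} (π : A → G) (w : List A) : G :=
  (w.map π).prod

/-- `π : A → G` generates `G` (positive words suffice; the generating set is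
assumed symmetric, see `SymmetricGen`). -/
def Generates {G : Type} [Group G] {A : Type} (π : A → G) : Prop :=
  ∀ g : G, ∃ w : List A, wordEval π w = g

/-- The generating set is symmetric: `A = A⁻¹`. -/
def SymmetricGen {G : Type} [Group G] {A : Type} (π : A → G) : Prop :=
  ∀ a : A, ∃ b : A, π b = (π a)⁻¹

/-- The word length of `g` with respect to the generating map `π`. -/
noncomputable def wordLength {G : Type} [Group G] {A : Type} (π : A → G) (g : G) : ℕ :=
  sInf {n : ℕ | ∃ w : List A, w.length = n ∧ wordEval π w = g}

/-- The word metric on `G` induced by the generating map `π`. -/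
noncomputable def wordDist {G : Type} [Group G] {A : Type} (π : A → G) (g h : G) : ℕ :=
  wordLength π (g⁻¹ * h)

/-- The growth function of the subgroup `H` with respect to `π`:
the number of elements of `H` of word length at most `n`. -/
noncomputable def growthFun {G : Type} [Group G] {A : Type} (π : A → G)
    (H : Subgroup G) (n : ℕ) : ℕ :=
  Set.ncard {g : G | g ∈ H ∧ wordLength π g ≤ n}

/-- The exponential growth rate of the subgroup `H` with respect to `π`. -/
noncomputable def growthRate {G : Type} [Group G] {A : Type} (π : A → G)
    (H : Subgroup G) : ℝ :=
  Filter.limsup (fun n : ℕ => (growthFun π H n : ℝ) ^ (1 / (n : ℝ))) Filter.atTop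

/-!
Pick coset representatives `S` of `H'` in `H` (finitely many, `[H : H']` of them) and let `C`
bound the word lengths of their inverses. Writing `h ∈ H` as `s * k` with `s ∈ S`, `k ∈ H'`
gives `|k| ≤ |h| + C`, so `f_H(n) ≤ [H : H'] · f_{H'}(n + C)`; conversely `f_{H'} ≤ f_H`.
A constant factor and a bounded shift of the argument do not change `limsup (f n)^(1/n)`.
All these `n`-th roots are at most `|A| + 1`, since the ball of radius `n` lies in `({1} ∪ A)^n`;
this boundedness matters because `limsup` of an unbounded real sequence is a junk value.
-/

open Filter Topology
open scoped Pointwise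

lemma Set.ncard_mul_le {M : Type*} [Mul M] [IsCancelMul M] (s t : Set M) :
    (s * t).ncard ≤ s.ncard * t.ncard := by
  simpa only [Nat.card_coe_set_eq] using Set.natCard_mul_le

lemma Subgroup.exists_finite_mul_eq_of_le {G : Type*} [Group G] {H H' : Subgroup G}
    (hle : H' ≤ H) [(H'.subgroupOf H).FiniteIndex] :
    ∃ S : Set G, S.Finite ∧ S.ncard = (H'.subgroupOf H).index ∧ S * H' = H := by
  obtain ⟨S, hS, -⟩ := (H'.subgroupOf H).exists_isComplement_left 1
  have hH' : (H.subtype '' (H'.subgroupOf H) : Set G) = H' := by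
    rw [← Subgroup.coe_map, Subgroup.subgroupOf_map_subtype, inf_of_le_left hle]
  refine ⟨H.subtype '' S, hS.finite_left.image _, ?_, ?_⟩
  · rw [Set.ncard_image_of_injective _ H.subtype_injective, hS.ncard_left]
  · rw [← hH', ← Set.image_mul, hS.mul_eq, Set.image_univ, Subgroup.coe_subtype,
      Subtype.range_coe]

section NthRoot

lemma Real.rpow_one_div_natCast_le_iff {x y : ℝ} {n : ℕ} (hx : 0 ≤ x) (hy : 0 ≤ y)
    (hn : n ≠ 0) :
    x ^ (1 / (n : ℝ)) ≤ y ↔ x ≤ y ^ n := by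
  rw [one_div, Real.rpow_inv_le_iff_of_pos hx hy (by positivity), Real.rpow_natCast]

variable {u v : ℕ → ℝ}

lemma isBoundedUnder_rpow_one_div_of_le_pow {B : ℝ} (hu : ∀ n, 0 ≤ u n) (hB : 0 ≤ B)
    (h : ∀ n, u n ≤ B ^ n) :
    IsBoundedUnder (· ≤ ·) atTop fun n : ℕ => u n ^ (1 / (n : ℝ)) :=
  isBoundedUnder_of_eventually_le <| (eventually_ne_atTop 0).mono fun n hn =>
    (Real.rpow_one_div_natCast_le_iff (hu n) hB hn).2 (h n)

lemma limsup_rpow_one_div_le_of_eventually_le_mul_pow {c r : ℝ} (hu : ∀ n, 0 ≤ u n)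
    (hc : 0 < c) (hr : 0 ≤ r) (h : ∀ᶠ n in atTop, u n ≤ c * r ^ n) :
    limsup (fun n : ℕ => u n ^ (1 / (n : ℝ))) atTop ≤ r := by
  have hroot : Tendsto (fun n : ℕ => c ^ (1 / (n : ℝ)) * r) atTop (𝓝 r) := by
    simpa using ((tendsto_const_nhds (x := c)).rpow tendsto_one_div_atTop_nhds_zero_nat
      (Or.inl hc.ne')).mul_const r
  have hle : (fun n : ℕ => u n ^ (1 / (n : ℝ))) ≤ᶠ[atTop]
      fun n => c ^ (1 / (n : ℝ)) * r := by
    filter_upwards [h, eventually_ne_atTop 0] with n hn hn0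
    rwa [Real.rpow_one_div_natCast_le_iff (hu n) (by positivity) hn0, mul_pow, one_div,
      Real.rpow_inv_natCast_pow hc.le hn0]
  calc limsup (fun n : ℕ => u n ^ (1 / (n : ℝ))) atTop
      ≤ limsup (fun n : ℕ => c ^ (1 / (n : ℝ)) * r) atTop :=
        limsup_le_limsup hle (isCoboundedUnder_le_of_le atTop fun n => Real.rpow_nonneg (hu n) _)
          hroot.isBoundedUnder_le
    _ = r := hroot.limsup_eq

lemma eventually_le_pow_of_limsup_rpow_one_div_lt {r : ℝ} (hv : ∀ n, 0 ≤ v n)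
    (hbdd : IsBoundedUnder (· ≤ ·) atTop fun n : ℕ => v n ^ (1 / (n : ℝ)))
    (h : limsup (fun n : ℕ => v n ^ (1 / (n : ℝ))) atTop < r) :
    ∀ᶠ n in atTop, v n ≤ r ^ n := by
  filter_upwards [eventually_lt_of_limsup_lt h hbdd, eventually_ne_atTop 0] with n hn hn0
  have hr : 0 ≤ r := (Real.rpow_nonneg (hv n) _).trans hn.le
  exact (Real.rpow_one_div_natCast_le_iff (hv n) hr hn0).1 hn.le

lemma limsup_rpow_one_div_le_of_le_mul_add {D : ℝ} {C : ℕ} (hu : ∀ n, 0 ≤ u n)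
    (hv : ∀ n, 0 ≤ v n) (hD : 0 < D)
    (hbdd : IsBoundedUnder (· ≤ ·) atTop fun n : ℕ => v n ^ (1 / (n : ℝ)))
    (huv : ∀ n, u n ≤ D * v (n + C)) :
    limsup (fun n : ℕ => u n ^ (1 / (n : ℝ))) atTop ≤
      limsup (fun n : ℕ => v n ^ (1 / (n : ℝ))) atTop := by
  have hL : 0 ≤ limsup (fun n : ℕ => v n ^ (1 / (n : ℝ))) atTop :=
    le_limsup_of_frequently_le (.of_forall fun n => Real.rpow_nonneg (hv n) _) hbdd
  refine le_of_forall_gt_imp_ge_of_dense fun r hr => ?_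
  have hr0 : 0 < r := hL.trans_lt hr
  refine limsup_rpow_one_div_le_of_eventually_le_mul_pow hu (by positivity : 0 < D * r ^ C)
    hr0.le ?_
  filter_upwards [(tendsto_add_atTop_nat C).eventually
    (eventually_le_pow_of_limsup_rpow_one_div_lt hv hbdd hr)] with n hn
  calc u n ≤ D * v (n + C) := huv n
    _ ≤ D * r ^ (n + C) := by gcongr
    _ = D * r ^ C * r ^ n := by ring

end NthRoot

section WordLength

variable {G : Type} [Group G] {A : Type} {π : A → G}

lemma exists_length_eq_wordLength (hgen : Generates π) (g : G) :
    ∃ w : List A, w.length = wordLength π g ∧ wordEval π w = g := by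
  obtain ⟨w, hw⟩ := hgen g
  have hne : {n | ∃ w : List A, w.length = n ∧ wordEval π w = g}.Nonempty :=
    ⟨_, w, rfl, hw⟩
  exact Nat.sInf_mem hne

lemma wordLength_wordEval_le (w : List A) : wordLength π (wordEval π w) ≤ w.length :=
  Nat.sInf_le ⟨w, rfl, rfl⟩

lemma wordEval_append (v w : List A) : wordEval π (v ++ w) = wordEval π v * wordEval π w := by
  simp [wordEval]

lemma wordLength_mul_le (hgen : Generates π) (g h : G) :
    wordLength π (g * h) ≤ wordLength π g + wordLength π h := by
  obtain ⟨v, hv, rfl⟩ := exists_length_eq_wordLength hgen g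
  obtain ⟨w, hw, rfl⟩ := exists_length_eq_wordLength hgen h
  rw [← hv, ← hw, ← List.length_append, ← wordEval_append]
  exact wordLength_wordEval_le _

lemma wordEval_mem_pow [DecidableEq G] {S : Finset G} (hS : ∀ a, π a ∈ S) (w : List A) :
    wordEval π w ∈ S ^ w.length := by
  induction w with
  | nil => simp [wordEval]
  | cons a w ih =>
    rw [List.length_cons, pow_succ']
    exact Finset.mul_mem_mul (hS a) ih

variable [Fintype A]

lemma setOf_wordLength_le_subset_pow [DecidableEq G] (hgen : Generates π) (n : ℕ) :
    {g | wordLength π g ≤ n} ⊆ ↑(insert 1 (Finset.univ.image π) ^ n) := by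
  intro g hg
  obtain ⟨w, hw, rfl⟩ := exists_length_eq_wordLength hgen g
  refine Finset.pow_subset_pow_right (Finset.mem_insert_self 1 _) (hw.trans_le hg)
    (wordEval_mem_pow (fun a => ?_) w)
  exact Finset.mem_insert_of_mem (Finset.mem_image_of_mem π (Finset.mem_univ a))

lemma finite_setOf_mem_and_wordLength_le (hgen : Generates π) (H : Subgroup G) (n : ℕ) :
    {g | g ∈ H ∧ wordLength π g ≤ n}.Finite := by
  classical
  exact (Finset.finite_toSet _).subset fun _ hg => setOf_wordLength_le_subset_pow hgen n hg.2

lemma growthFun_le_pow (hgen : Generates π) (H : Subgroup G) (n : ℕ) :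
    growthFun π H n ≤ (Fintype.card A + 1) ^ n := by
  classical
  calc growthFun π H n ≤ (insert 1 (Finset.univ.image π) ^ n).card := by
        rw [← Set.ncard_coe_finset]
        exact Set.ncard_le_ncard (fun _ hg => setOf_wordLength_le_subset_pow hgen n hg.2)
          (Finset.finite_toSet _)
    _ ≤ (insert 1 (Finset.univ.image π)).card ^ n := Finset.card_pow_le
    _ ≤ (Fintype.card A + 1) ^ n := by
        gcongr
        exact (Finset.card_insert_le _ _).trans (Nat.add_le_add_right Finset.card_image_le 1)

lemma growthFun_mono (hgen : Generates π) {H H' : Subgroup G} (hle : H' ≤ H) (n : ℕ) :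
    growthFun π H' n ≤ growthFun π H n :=
  Set.ncard_le_ncard (fun _ hg => ⟨hle hg.1, hg.2⟩)
    (finite_setOf_mem_and_wordLength_le hgen H n)

lemma exists_growthFun_le_index_mul (hgen : Generates π) {H H' : Subgroup G} (hle : H' ≤ H)
    [(H'.subgroupOf H).FiniteIndex] :
    ∃ C : ℕ, ∀ n, growthFun π H n ≤ (H'.subgroupOf H).index * growthFun π H' (n + C) := by
  obtain ⟨S, hSfin, hScard, hSH⟩ := Subgroup.exists_finite_mul_eq_of_le hle
  obtain ⟨C, hC⟩ := (hSfin.image fun s => wordLength π s⁻¹).bddAbove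
  refine ⟨C, fun n => ?_⟩
  have hcover : {g | g ∈ H ∧ wordLength π g ≤ n} ⊆
      S * {k | k ∈ H' ∧ wordLength π k ≤ n + C} := by
    rintro g ⟨hgH, hgn⟩
    obtain ⟨s, hs, k, hk, rfl⟩ : g ∈ S * H' := hSH ▸ hgH
    refine ⟨s, hs, k, ⟨hk, ?_⟩, rfl⟩
    calc wordLength π k = wordLength π (s⁻¹ * (s * k)) := by rw [inv_mul_cancel_left]
      _ ≤ wordLength π s⁻¹ + wordLength π (s * k) := wordLength_mul_le hgen _ _
      _ ≤ C + n := add_le_add (hC ⟨s, hs, rfl⟩) hgn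
      _ = n + C := add_comm _ _
  calc growthFun π H n ≤ (S * {k | k ∈ H' ∧ wordLength π k ≤ n + C}).ncard :=
        Set.ncard_le_ncard hcover (hSfin.mul (finite_setOf_mem_and_wordLength_le hgen H' _))
    _ ≤ S.ncard * growthFun π H' (n + C) := Set.ncard_mul_le _ _
    _ = (H'.subgroupOf H).index * growthFun π H' (n + C) := by rw [hScard]

end WordLength

theorem growthRate_eq_of_finiteIndex_general {G : Type} [Group G] {A : Type} [Fintype A]
    (π : A → G) (hgen : Generates π)
    (H H' : Subgroup G) (hle : H' ≤ H)
    (hfi : (H'.subgroupOf H).FiniteIndex) :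
    growthRate π H = growthRate π H' := by
  have hbdd (K : Subgroup G) :
      IsBoundedUnder (· ≤ ·) atTop fun n : ℕ => (growthFun π K n : ℝ) ^ (1 / (n : ℝ)) :=
    isBoundedUnder_rpow_one_div_of_le_pow (B := Fintype.card A + 1) (fun _ => Nat.cast_nonneg _)
      (by positivity) fun n => by exact_mod_cast growthFun_le_pow hgen K n
  obtain ⟨C, hC⟩ := exists_growthFun_le_index_mul hgen hle
  apply le_antisymm
  · exact limsup_rpow_one_div_le_of_le_mul_add (fun _ => Nat.cast_nonneg _)
      (fun _ => Nat.cast_nonneg _) (Nat.cast_pos.2 hfi.index_ne_zero.bot_lt) (hbdd H')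
      fun n => by exact_mod_cast hC n
  · exact limsup_rpow_one_div_le_of_le_mul_add (D := 1) (C := 0) (fun _ => Nat.cast_nonneg _)
      (fun _ => Nat.cast_nonneg _) one_pos (hbdd H)
      fun n => by simpa using growthFun_mono hgen hle n

/-- If `H'` is a finite-index subgroup of `H ≤ G`, then the
growth rates of `H` and `H'` with respect to the finite generating set coincide. -/
theorem growthRate_eq_of_finiteIndex {G : Type} [Group G] {A : Type} [Fintype A]
    (π : A → G) (hgen : Generates π) (hsym : SymmetricGen π)
    (H H' : Subgroup G) (hle : H' ≤ H)
    (hfi : (H'.subgroupOf H).FiniteIndex) :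
    growthRate π H = growthRate π H' :=
  growthRate_eq_of_finiteIndex_general π hgen H H' hle hfi
end

section
/- Let X be a geodesic metric space and let α, β : [0,s] → X be geodesics with α(0) = β(0) and d(α(s), β(s)) ≤ 1. If α is M-Morse, then β is M'-Morse for a Morse gauge M' depending only on M. -/
/-!
Quasi-geodesics need not be continuous, so moving the endpoints of a `(k, c)`-quasi-geodesic
by at most `D` yields a `(k, c + 2D)`-quasi-geodesic. Moving the endpoint `β s` of `β` to `α s`
makes `β` a `(1, 2)`-quasi-geodesic with endpoints on `α`, so the Morse property of `α` forces
`β` to fellow-travel `α` at uniformly bounded distance `D`. Given a quasi-geodesic with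
endpoints on `β`, moving its endpoints onto `α` and applying the Morse property of `α` once
more places it near `α`, hence within `D` more of `β`.
-/

open Classical

/-- A Morse gauge: a function `M : (k, c) ↦ M(k,c)`. -/
def MorseGauge : Type := ℝ → ℝ → ℝ

/-- `q` is a `(k,c)`-quasi-geodesic on the interval `[a,b]`. -/
def IsQuasiGeodesicOn {X : Type} [MetricSpace X] (k c : ℝ) (q : ℝ → X) (a b : ℝ) : Prop :=
  ∀ s ∈ Set.Icc a b, ∀ t ∈ Set.Icc a b,
    (1 / k) * |s - t| - c ≤ dist (q s) (q t) ∧ dist (q s) (q t) ≤ k * |s - t| + c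

/-- `γ` is a geodesic on the interval `[a,b]`. -/
def IsGeodesicOn {X : Type} [MetricSpace X] (γ : ℝ → X) (a b : ℝ) : Prop :=
  ∀ s ∈ Set.Icc a b, ∀ t ∈ Set.Icc a b, dist (γ s) (γ t) = |s - t|

/-- `γ` (defined on `[a,b]`) is `M`-Morse: every `(k,c)`-quasi-geodesic with
endpoints on `γ` lies in the `M k c`-neighborhood of the subsegment of `γ`
between those endpoints. -/
def IsMorseOn {X : Type} [MetricSpace X] (M : MorseGauge) (γ : ℝ → X) (a b : ℝ) : Prop :=
  ∀ k c : ℝ, 1 ≤ k → 0 ≤ c →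
    ∀ (q : ℝ → X) (a' b' s' t' : ℝ), a' ≤ b' →
      IsQuasiGeodesicOn k c q a' b' →
      s' ∈ Set.Icc a b → t' ∈ Set.Icc a b → s' ≤ t' →
      q a' = γ s' → q b' = γ t' →
      ∀ u ∈ Set.Icc a' b', ∃ v ∈ Set.Icc s' t', dist (q u) (γ v) ≤ M k c

/-- `X` is a geodesic metric space. -/
def IsGeodesicSpace (X : Type) [MetricSpace X] : Prop :=
  ∀ x y : X, ∃ γ : ℝ → X, γ 0 = x ∧ γ (dist x y) = y ∧ IsGeodesicOn γ 0 (dist x y)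

open Set

section

variable {X : Type} [MetricSpace X]

theorem IsQuasiGeodesicOn.of_dist_le {k c δ a b : ℝ} {q Q : ℝ → X}
    (hq : IsQuasiGeodesicOn k c q a b) (hQ : ∀ u ∈ Icc a b, dist (Q u) (q u) ≤ δ) :
    IsQuasiGeodesicOn k (c + 2 * δ) Q a b := by
  intro s hs t ht
  obtain ⟨hlow, hup⟩ := hq s hs t ht
  have h₁ := dist_triangle4 (Q s) (q s) (q t) (Q t)
  have h₂ := dist_triangle4 (q s) (Q s) (Q t) (q t)
  rw [dist_comm (q t)] at h₁
  rw [dist_comm (q s) (Q s)] at h₂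
  constructor <;> linarith [hQ s hs, hQ t ht]

namespace IsGeodesicOn

variable {γ α β : ℝ → X} {a b : ℝ}

theorem isQuasiGeodesicOn (hγ : IsGeodesicOn γ a b) : IsQuasiGeodesicOn 1 0 γ a b := by
  intro s hs t ht
  simp [hγ s hs t ht]

theorem injOn (hγ : IsGeodesicOn γ a b) : InjOn γ (Icc a b) := by
  intro s hs t ht hst
  have := hγ s hs t ht
  rwa [hst, dist_self, eq_comm, abs_eq_zero, sub_eq_zero] at this

theorem abs_sub_le_dist (hα : IsGeodesicOn α a b) (hβ : IsGeodesicOn β a b) (ha : α a = β a)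
    {t v : ℝ} (ht : t ∈ Icc a b) (hv : v ∈ Icc a b) : |t - v| ≤ dist (α t) (β v) := by
  have haI : a ∈ Icc a b := ⟨le_rfl, ht.1.trans ht.2⟩
  have h := abs_dist_sub_le (α t) (β v) (α a)
  rwa [hα t ht a haI, ha, hβ v hv a haI, abs_of_nonneg (sub_nonneg.2 ht.1),
    abs_of_nonneg (sub_nonneg.2 hv.1), sub_sub_sub_cancel_right] at h

end IsGeodesicOn

namespace IsMorseOn

variable {M : MorseGauge} {α β : ℝ → X} {a b : ℝ}

theorem mono {M' : MorseGauge} (h : IsMorseOn M α a b) (hM : ∀ k c, M k c ≤ M' k c) :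
    IsMorseOn M' α a b := by
  intro k c hk hc q a' b' s' t' hab hq hs' ht' hst hqa hqb u hu
  obtain ⟨v, hv, hdv⟩ := h k c hk hc q a' b' s' t' hab hq hs' ht' hst hqa hqb u hu
  exact ⟨v, hv, hdv.trans (hM k c)⟩

theorem dist_le_of_isGeodesicOn {r : ℝ} (hM : IsMorseOn M α a b) (hα : IsGeodesicOn α a b)
    (hβ : IsGeodesicOn β a b) (hab : a ≤ b) (ha : α a = β a) (hb : dist (α b) (β b) ≤ r) :
    ∀ t ∈ Icc a b, dist (α t) (β t) ≤ 2 * (M 1 (2 * r) + r) := by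
  intro t ht
  set Q : ℝ → X := fun u => if u = b then α b else β u
  have hQβ : ∀ u ∈ Icc a b, dist (Q u) (β u) ≤ r := by
    intro u _
    by_cases hu : u = b
    · simpa [Q, hu] using hb
    · simpa [Q, hu] using dist_nonneg.trans hb
  have hQa : Q a = α a := by
    by_cases h : a = b
    · simp [Q, h]
    · simp [Q, h, ha]
  have hQb : Q b = α b := if_pos rfl
  have hQ : IsQuasiGeodesicOn 1 (2 * r) Q a b := by
    simpa using hβ.isQuasiGeodesicOn.of_dist_le hQβ
  obtain ⟨v, hv, hdv⟩ := hM 1 (2 * r) le_rfl (by linarith [dist_nonneg.trans hb]) Q a b a b hab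
    hQ ⟨le_rfl, hab⟩ ⟨hab, le_rfl⟩ hab hQa hQb t ht
  have hvt : dist (α v) (β t) ≤ M 1 (2 * r) + r := by
    have := dist_triangle (β t) (Q t) (α v)
    rw [dist_comm (β t), dist_comm (β t)] at this
    linarith [hQβ t ht]
  calc dist (α t) (β t) ≤ dist (α t) (α v) + dist (α v) (β t) := dist_triangle _ _ _
    _ = |t - v| + dist (α v) (β t) := by rw [hα t ht v hv]
    _ ≤ 2 * (M 1 (2 * r) + r) := by
      rw [abs_sub_comm]
      linarith [hα.abs_sub_le_dist hβ ha hv ht]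

theorem of_dist_le {D : ℝ} (hM : IsMorseOn M α a b) (hβ : InjOn β (Icc a b))
    (hD : ∀ t ∈ Icc a b, dist (α t) (β t) ≤ D) :
    IsMorseOn (fun k c => M k (c + 2 * D) + 2 * D) β a b := by
  intro k c hk hc q a' b' s' t' hab hq hs' ht' hst hqa hqb u hu
  have hD₀ : 0 ≤ D := dist_nonneg.trans (hD s' hs')
  set Q : ℝ → X := fun u => if u = a' then α s' else if u = b' then α t' else q u
  have hQq : ∀ u ∈ Icc a' b', dist (Q u) (q u) ≤ D := by
    intro u _
    simp only [Q]
    split_ifs with h₁ h₂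
    · rw [h₁, hqa]; exact hD s' hs'
    · rw [h₂, hqb]; exact hD t' ht'
    · simpa using hD₀
  have hQa : Q a' = α s' := if_pos rfl
  have hQb : Q b' = α t' := by
    by_cases h : b' = a'
    · have : s' = t' := hβ hs' ht' (by rw [← hqa, ← hqb, h])
      simp [Q, h, this]
    · simp [Q, h]
  obtain ⟨v, hv, hdv⟩ := hM k (c + 2 * D) hk (by positivity) Q a' b' s' t' hab
    (hq.of_dist_le hQq) hs' ht' hst hQa hQb u hu
  refine ⟨v, hv, ?_⟩
  calc dist (q u) (β v) ≤ dist (q u) (Q u) + dist (Q u) (α v) + dist (α v) (β v) :=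
        dist_triangle4 _ _ _ _
    _ ≤ D + M k (c + 2 * D) + D := by
      gcongr
      · rw [dist_comm]; exact hQq u hu
      · exact hD v (Icc_subset_Icc hs'.1 ht'.2 hv)
    _ = M k (c + 2 * D) + 2 * D := by ring

end IsMorseOn

end

/-- There is a function `F` of Morse gauges such that in any
geodesic metric space, if `α, β : [0,s] → X` are geodesics with `α 0 = β 0`,
`dist (α s) (β s) ≤ 1`, and `α` is `M`-Morse, then `β` is `F M`-Morse. -/
theorem morse_is_contagious :
    ∃ F : MorseGauge → MorseGauge,
      (∀ (M : MorseGauge) (k c : ℝ), M k c ≤ F M k c) ∧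
      ∀ (X : Type) [MetricSpace X], IsGeodesicSpace X →
        ∀ (M : MorseGauge) (s : ℝ) (α β : ℝ → X), 0 ≤ s →
          IsGeodesicOn α 0 s → IsGeodesicOn β 0 s →
          α 0 = β 0 → dist (α s) (β s) ≤ 1 →
          IsMorseOn M α 0 s → IsMorseOn (F M) β 0 s := by
  let D : MorseGauge → ℝ := fun M => 2 * (M 1 2 + 1)
  refine ⟨fun M k c => max (M k c) (M k (c + 2 * D M) + 2 * D M),
    fun M k c => le_max_left _ _, ?_⟩
  intro X _ _ M s α β hs hα hβ h0 h1 hM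
  have hfellow := hM.dist_le_of_isGeodesicOn hα hβ hs h0 h1
  rw [mul_one] at hfellow
  exact (hM.of_dist_le hβ.injOn hfellow).mono fun k c => le_max_right _ _
end

section
/- Let X be a geodesic metric space, M a Morse gauge, and α, β : [0,s] → X two M-Morse geodesics with α(0) = β(0). If d(α(r), β) < K for some r ∈ [0,s] and K > 0, then d(α(t), β(t)) ≤ 8·M(3,0) for all t < r − K − 4·M(3,0). In particular, if α(s) = β(s), then d(α(t), β(t)) ≤ 12·M(3,0) for all t ∈ [0,s]. -/
open Classical

/-! The geodesic `α` is `2·M(3,0)`-close to `β` up to any point `β p` closest to some `α r`: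
a geodesic from `β p` to `α r` prolongs `β|[0,p]` to a `(3,0)`-quasi-geodesic from `α 0` to
`α r`, because the closest-point property forces the new piece to move away from `β`. By the
Morse property `β t` is then `M(3,0)`-close to some `α v`, and since `α` and `β` start at the
same point, `|t - v| ≤ M(3,0)`. A closest point `β p` to `α r` at distance `< K` satisfies
`p > r - K`, which gives the first claim with room to spare; equal endpoints give `p = r = s`. -/

open Set Metric

section Geodesic

variable {X : Type} [MetricSpace X] {γ : ℝ → X} {a b : ℝ}

lemma IsGeodesicOn.dist_eq_sub (hγ : IsGeodesicOn γ a b) {s t : ℝ} (hs : s ∈ Icc a b)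
    (ht : t ∈ Icc a b) (hst : s ≤ t) : dist (γ s) (γ t) = t - s := by
  rw [hγ s hs t ht, abs_sub_comm, abs_of_nonneg (sub_nonneg.mpr hst)]

lemma IsGeodesicOn.mono (hγ : IsGeodesicOn γ a b) {a' b' : ℝ} (ha : a ≤ a') (hb : b' ≤ b) :
    IsGeodesicOn γ a' b' :=
  fun s hs t ht => hγ s ⟨ha.trans hs.1, hs.2.trans hb⟩ t ⟨ha.trans ht.1, ht.2.trans hb⟩

lemma IsGeodesicOn.continuousOn (hγ : IsGeodesicOn γ a b) : ContinuousOn γ (Icc a b) :=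
  (LipschitzOnWith.of_dist_le_mul fun s hs t ht => by
    rw [hγ s hs t ht, NNReal.coe_one, one_mul, Real.dist_eq]).continuousOn

lemma IsGeodesicOn.dist_le_two_mul {s t v D : ℝ} {x : X} (hγ : IsGeodesicOn γ 0 s)
    (ht : t ∈ Icc 0 s) (hv : v ∈ Icc 0 s) (hx : dist (γ 0) x = t) (hxv : dist x (γ v) ≤ D) :
    dist (γ t) x ≤ 2 * D := by
  have h0s : (0 : ℝ) ∈ Icc 0 s := ⟨le_rfl, ht.1.trans ht.2⟩
  have hγv : dist (γ 0) (γ v) = v := by rw [hγ.dist_eq_sub h0s hv hv.1, sub_zero]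
  have htv : |t - v| ≤ D := abs_le.mpr
    ⟨by linarith [dist_triangle (γ 0) x (γ v)],
     by linarith [dist_triangle (γ 0) (γ v) x, dist_comm x (γ v)]⟩
  calc dist (γ t) x ≤ dist (γ t) (γ v) + dist (γ v) x := dist_triangle _ _ _
    _ ≤ D + D := by rw [hγ t ht v hv, dist_comm]; exact add_le_add htv hxv
    _ = 2 * D := by ring

end Geodesic

lemma isQuasiGeodesicOn_of_le {X : Type} [MetricSpace X] {k c a b : ℝ} {q : ℝ → X}
    (h : ∀ s ∈ Icc a b, ∀ t ∈ Icc a b, s ≤ t →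
      (1 / k) * (t - s) - c ≤ dist (q s) (q t) ∧ dist (q s) (q t) ≤ k * (t - s) + c) :
    IsQuasiGeodesicOn k c q a b := by
  intro s hs t ht
  rcases le_total s t with hst | hts
  · rw [abs_sub_comm, abs_of_nonneg (sub_nonneg.mpr hst)]
    exact h s hs t ht hst
  · rw [abs_of_nonneg (sub_nonneg.mpr hts), dist_comm]
    exact h t ht s hs hts

lemma IsMorseOn.gauge_nonneg {X : Type} [MetricSpace X] {M : MorseGauge} {γ : ℝ → X}
    {a b k c : ℝ} (hγ : IsMorseOn M γ a b) (hk : 1 ≤ k) (hc : 0 ≤ c) (hab : a ≤ b) :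
    0 ≤ M k c := by
  have hconst : IsQuasiGeodesicOn k c (fun _ => γ a) 0 0 := fun s hs t ht => by
    rw [le_antisymm hs.2 hs.1, le_antisymm ht.2 ht.1]
    simpa using hc
  obtain ⟨v, hv, hd⟩ := hγ k c hk hc _ 0 0 a a le_rfl hconst ⟨le_rfl, hab⟩ ⟨le_rfl, hab⟩
    le_rfl rfl rfl 0 ⟨le_rfl, le_rfl⟩
  rw [le_antisymm hv.2 hv.1] at hd
  simpa using hd

section Concatenation

variable {X : Type} {β σ : ℝ → X} {p : ℝ}

noncomputable def concatAt (β σ : ℝ → X) (p : ℝ) : ℝ → X :=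
  fun x => if x ≤ p then β x else σ (x - p)

lemma concatAt_of_le {x : ℝ} (hx : x ≤ p) : concatAt β σ p x = β x := if_pos hx

lemma concatAt_of_ge {x : ℝ} (hσ : σ 0 = β p) (hx : p ≤ x) :
    concatAt β σ p x = σ (x - p) := by
  rcases hx.lt_or_eq with hlt | rfl
  · exact if_neg hlt.not_ge
  · rw [concatAt_of_le le_rfl, sub_self, hσ]

variable [MetricSpace X] {a : ℝ} {x : X}

lemma dist_bounds_of_closest (hβ : IsGeodesicOn β a p)
    (hσ : IsGeodesicOn σ 0 (dist (β p) x)) (hσ0 : σ 0 = β p) (hσx : σ (dist (β p) x) = x)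
    (hmin : ∀ u ∈ Icc a p, dist x (β p) ≤ dist x (β u)) {u v : ℝ}
    (hu : u ∈ Icc a p) (hv : v ∈ Icc 0 (dist (β p) x)) :
    (1 / 3) * ((p - u) + v) ≤ dist (β u) (σ v) ∧ dist (β u) (σ v) ≤ (p - u) + v := by
  have hp : p ∈ Icc a p := ⟨hu.1.trans hu.2, le_rfl⟩
  have h0 : (0 : ℝ) ∈ Icc 0 (dist (β p) x) := ⟨le_rfl, dist_nonneg⟩
  have hd : dist (β p) x ∈ Icc 0 (dist (β p) x) := ⟨dist_nonneg, le_rfl⟩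
  have hβu : dist (β u) (β p) = p - u := hβ.dist_eq_sub hu hp hu.2
  have hσv : dist (β p) (σ v) = v := by rw [← hσ0, hσ.dist_eq_sub h0 hv hv.1, sub_zero]
  have hσvx : dist (σ v) x = dist (β p) x - v := by
    conv_lhs => rw [← hσx]
    exact hσ.dist_eq_sub hv hd hv.2
  have hupper := dist_triangle (β u) (β p) (σ v)
  have hlower := dist_triangle (β u) (σ v) (β p)
  -- `β p` is closest to `x`, so the point `σ v`, which is `v` closer to `x`, is `v` away from `β u`
  have hclosest : v ≤ dist (β u) (σ v) := by
    linarith [hmin u hu, dist_triangle x (σ v) (β u), dist_comm x (σ v), dist_comm (σ v) (β u),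
      dist_comm x (β p), dist_comm (σ v) (β p)]
  constructor <;> linarith [dist_comm (σ v) (β p)]

lemma isQuasiGeodesicOn_concatAt_of_closest (hβ : IsGeodesicOn β a p)
    (hσ : IsGeodesicOn σ 0 (dist (β p) x)) (hσ0 : σ 0 = β p) (hσx : σ (dist (β p) x) = x)
    (hmin : ∀ u ∈ Icc a p, dist x (β p) ≤ dist x (β u)) :
    IsQuasiGeodesicOn 3 0 (concatAt β σ p) a (p + dist (β p) x) := by
  refine isQuasiGeodesicOn_of_le fun s hs t ht hst => ?_
  rcases le_total t p with htp | hpt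
  · rw [concatAt_of_le (hst.trans htp), concatAt_of_le htp,
      hβ.dist_eq_sub ⟨hs.1, hst.trans htp⟩ ⟨hs.1.trans hst, htp⟩ hst]
    constructor <;> linarith
  rcases le_total s p with hsp | hps
  · rw [concatAt_of_le hsp, concatAt_of_ge hσ0 hpt]
    have := dist_bounds_of_closest hβ hσ hσ0 hσx hmin ⟨hs.1, hsp⟩
      ⟨sub_nonneg.mpr hpt, by linarith [ht.2]⟩
    constructor <;> linarith
  · rw [concatAt_of_ge hσ0 hps, concatAt_of_ge hσ0 hpt,
      hσ.dist_eq_sub ⟨sub_nonneg.mpr hps, by linarith [hs.2]⟩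
        ⟨sub_nonneg.mpr hpt, by linarith [ht.2]⟩ (by linarith)]
    constructor <;> linarith

end Concatenation

lemma IsMorseOn.dist_le_of_closest {X : Type} [MetricSpace X] (hX : IsGeodesicSpace X)
    {M : MorseGauge} {α β : ℝ → X} {s r p t : ℝ} (hα : IsGeodesicOn α 0 s)
    (hαM : IsMorseOn M α 0 s) (hβ : IsGeodesicOn β 0 p) (h0 : α 0 = β 0) (hr : r ∈ Icc 0 s)
    (hmin : ∀ u ∈ Icc 0 p, dist (α r) (β p) ≤ dist (α r) (β u)) (ht : t ∈ Icc 0 p)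
    (hts : t ≤ s) : dist (α t) (β t) ≤ 2 * M 3 0 := by
  obtain ⟨σ, hσ0, hσx, hσ⟩ := hX (β p) (α r)
  have hq := isQuasiGeodesicOn_concatAt_of_closest hβ hσ hσ0 hσx hmin
  have hp : 0 ≤ p := ht.1.trans ht.2
  have hq0 : concatAt β σ p 0 = α 0 := by rw [concatAt_of_le hp, h0]
  have hqr : concatAt β σ p (p + dist (β p) (α r)) = α r := by
    rw [concatAt_of_ge hσ0 (le_add_of_nonneg_right dist_nonneg), add_sub_cancel_left, hσx]
  obtain ⟨v, hv, hβv⟩ := hαM 3 0 (by norm_num) le_rfl _ 0 _ 0 r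
    (add_nonneg hp dist_nonneg) hq ⟨le_rfl, hr.1.trans hr.2⟩ hr hr.1 hq0 hqr t
    ⟨ht.1, ht.2.trans (le_add_of_nonneg_right dist_nonneg)⟩
  rw [concatAt_of_le ht.2] at hβv
  have hβt : dist (α 0) (β t) = t := by
    rw [h0, hβ.dist_eq_sub ⟨le_rfl, hp⟩ ht ht.1, sub_zero]
  exact hα.dist_le_two_mul ⟨ht.1, hts⟩ ⟨hv.1, hv.2.trans hr.2⟩ hβt hβv

theorem fellow_traveling_general (X : Type) [MetricSpace X] (hX : IsGeodesicSpace X)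
    (M : MorseGauge) (s : ℝ) (hs : 0 ≤ s) (α β : ℝ → X)
    (hα : IsGeodesicOn α 0 s) (hβ : IsGeodesicOn β 0 s)
    (hαM : IsMorseOn M α 0 s)
    (h0 : α 0 = β 0) :
    (∀ r K : ℝ, r ∈ Set.Icc 0 s → 0 < K →
        Metric.infDist (α r) (β '' Set.Icc 0 s) < K →
        ∀ t ∈ Set.Icc 0 s, t < r - K - 4 * M 3 0 →
          dist (α t) (β t) ≤ 8 * M 3 0) ∧
      (α s = β s → ∀ t ∈ Set.Icc 0 s, dist (α t) (β t) ≤ 12 * M 3 0) := by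
  have hM : 0 ≤ M 3 0 := hαM.gauge_nonneg (by norm_num) le_rfl hs
  constructor
  · intro r K hr _ hK t ht htr
    obtain ⟨_, ⟨p, hp, rfl⟩, hpr⟩ :=
      (isCompact_Icc.image_of_continuousOn hβ.continuousOn).exists_infDist_eq_dist
        ⟨β 0, mem_image_of_mem β ⟨le_rfl, hs⟩⟩ (α r)
    have hmin : ∀ u ∈ Icc 0 s, dist (α r) (β p) ≤ dist (α r) (β u) :=
      fun u hu => hpr ▸ infDist_le_dist_of_mem (mem_image_of_mem β hu)
    have hrp : r ≤ p + dist (α r) (β p) := by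
      have := dist_triangle (α 0) (β p) (α r)
      rw [hα.dist_eq_sub ⟨le_rfl, hs⟩ hr hr.1, h0, hβ.dist_eq_sub ⟨le_rfl, hs⟩ hp hp.1,
        dist_comm (β p)] at this
      linarith
    have := hαM.dist_le_of_closest hX hα (hβ.mono le_rfl hp.2) h0 hr
      (fun u hu => hmin u ⟨hu.1, hu.2.trans hp.2⟩) ⟨ht.1, by linarith⟩ ht.2
    linarith
  · intro hend t ht
    have := hαM.dist_le_of_closest hX hα hβ h0 ⟨hs, le_rfl⟩
      (fun u _ => by rw [hend, dist_self]; exact dist_nonneg) ht ht.2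
    linarith

/-- Fellow traveling of `M`-Morse geodesics with the same
start point: if `α` passes within `K` of `β`, then `α` and `β` stay `8·M(3,0)`
close up to time `r - K - 4·M(3,0)`; if moreover they share endpoints, then
they stay `12·M(3,0)` close throughout. -/
theorem fellow_traveling (X : Type) [MetricSpace X] (hX : IsGeodesicSpace X)
    (M : MorseGauge) (s : ℝ) (hs : 0 ≤ s) (α β : ℝ → X)
    (hα : IsGeodesicOn α 0 s) (hβ : IsGeodesicOn β 0 s)
    (hαM : IsMorseOn M α 0 s) (hβM : IsMorseOn M β 0 s)
    (h0 : α 0 = β 0) :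
    (∀ r K : ℝ, r ∈ Set.Icc 0 s → 0 < K →
        Metric.infDist (α r) (β '' Set.Icc 0 s) < K →
        ∀ t ∈ Set.Icc 0 s, t < r - K - 4 * M 3 0 →
          dist (α t) (β t) ≤ 8 * M 3 0) ∧
      (α s = β s → ∀ t ∈ Set.Icc 0 s, dist (α t) (β t) ≤ 12 * M 3 0) :=
  fellow_traveling_general X hX M s hs α β hα hβ hαM h0
end

section
/- Let A be a finite totally ordered alphabet and extend the order lexicographically to A*. If Q ⊆ (A × A)* is a regular language over the alphabet A × A, then the language J = { u ∈ A* : (u,v) ∈ Q for some v, and for all w, (u,w) ∈ Q implies u ⪯ w } is a regular language over A. -/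
/-!
Run a DFA `M` for `Q` on pairs in three ways at once while reading `u`: on the diagonal `(u, u)`,
on all partners of `u` (a subset construction), and on the partners lying lexicographically below
`u`. The last set can be updated letter by letter because `w ++ [b]` lies below `u ++ [a]` exactly
when `w` lies below `u`, or `w = u` and `b < a`; the diagonal run supplies the states for the
second case.
-/

namespace List

variable {α : Type*}

theorem exists_length_eq_add_one_iff {P : List α → Prop} {n : ℕ} :
    (∃ l, l.length = n + 1 ∧ P l) ↔ ∃ l a, l.length = n ∧ P (l ++ [a]) := by
  constructor
  · rintro ⟨l, hl, hP⟩
    obtain rfl | ⟨l, a, rfl⟩ := l.eq_nil_or_concat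
    · simp at hl
    · exact ⟨l, a, by simpa using hl, by simpa using hP⟩
  · rintro ⟨l, a, rfl, hP⟩
    exact ⟨l ++ [a], by simp, hP⟩

theorem lex_append_singleton_iff {r : α → α → Prop} {l₁ l₂ : List α} {a b : α}
    (h : l₁.length = l₂.length) :
    Lex r (l₁ ++ [a]) (l₂ ++ [b]) ↔ Lex r l₁ l₂ ∨ l₁ = l₂ ∧ r a b := by
  induction l₁ generalizing l₂ with
  | nil =>
    obtain rfl := eq_nil_of_length_eq_zero h.symm
    simp
  | cons c l₁ ih =>
    obtain _ | ⟨d, l₂⟩ := l₂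
    · simp at h
    · simp only [cons_append, cons_lex_cons_iff, ih (Nat.succ_injective h), cons.injEq]
      tauto

theorem eq_or_lex_lt_iff_not_lex_lt [LinearOrder α] {l₁ l₂ : List α} :
    l₁ = l₂ ∨ Lex (· < ·) l₁ l₂ ↔ ¬ Lex (· < ·) l₂ l₁ :=
  (not_lt_iff_eq_or_lt.trans (or_congr_left eq_comm)).symm

end List

namespace DFA

theorem eval_zip_append_singleton {α β σ : Type*} (M : DFA (α × β) σ) {u : List α}
    {w : List β} (h : u.length = w.length) (a : α) (b : β) :
    M.eval ((u ++ [a]).zip (w ++ [b])) = M.step (M.eval (u.zip w)) (a, b) := by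
  rw [List.zip_append h]
  exact M.eval_append_singleton _ _

variable {A σ : Type*} [LinearOrder A] (M : DFA (A × A) σ)

def lexLeast : DFA A (σ × Set σ × Set σ) where
  step p a :=
    (M.step p.1 (a, a),
     {s | ∃ t ∈ p.2.1, ∃ b, M.step t (a, b) = s},
     {s | (∃ t ∈ p.2.2, ∃ b, M.step t (a, b) = s) ∨ ∃ b < a, M.step p.1 (a, b) = s})
  start := (M.start, {M.start}, ∅)
  accept := {p | (∃ s ∈ p.2.1, s ∈ M.accept) ∧ ∀ s ∈ p.2.2, s ∉ M.accept}

theorem lexLeast_eval_diagonal (u : List A) : (M.lexLeast.eval u).1 = M.eval (u.zip u) := by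
  induction u using List.reverseRecOn with
  | nil => rfl
  | append_singleton u a ih =>
    rw [eval_append_singleton, eval_zip_append_singleton M rfl, ← ih]
    rfl

theorem lexLeast_eval_partners (u : List A) :
    (M.lexLeast.eval u).2.1 = (fun v ↦ M.eval (u.zip v)) '' {v | v.length = u.length} := by
  induction u using List.reverseRecOn with
  | nil => ext s; simp [lexLeast, eq_comm]
  | append_singleton u a ih =>
    ext s
    rw [eval_append_singleton]
    change (∃ t ∈ (M.lexLeast.eval u).2.1, ∃ b, M.step t (a, b) = s) ↔ _
    simp only [ih, Set.mem_image, Set.mem_ofPred_eq, List.length_append, List.length_singleton,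
      List.exists_length_eq_add_one_iff]
    constructor
    · rintro ⟨_, ⟨v, hv, rfl⟩, b, rfl⟩
      exact ⟨v, b, hv, M.eval_zip_append_singleton hv.symm a b⟩
    · rintro ⟨v, b, hv, rfl⟩
      exact ⟨_, ⟨v, hv, rfl⟩, b, (M.eval_zip_append_singleton hv.symm a b).symm⟩

theorem lexLeast_eval_partnersBelow (u : List A) :
    (M.lexLeast.eval u).2.2 =
      (fun w ↦ M.eval (u.zip w)) '' {w | w.length = u.length ∧ List.Lex (· < ·) w u} := by
  induction u using List.reverseRecOn with
  | nil => ext s; simp [lexLeast]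
  | append_singleton u a ih =>
    ext s
    rw [eval_append_singleton]
    change ((∃ t ∈ (M.lexLeast.eval u).2.2, ∃ b, M.step t (a, b) = s) ∨
      ∃ b < a, M.step (M.lexLeast.eval u).1 (a, b) = s) ↔ _
    simp only [ih, lexLeast_eval_diagonal, Set.mem_image, Set.mem_ofPred_eq, List.length_append,
      List.length_singleton, and_assoc, List.exists_length_eq_add_one_iff]
    constructor
    · rintro (⟨_, ⟨w, hw, hlex, rfl⟩, b, rfl⟩ | ⟨b, hb, rfl⟩)
      · exact ⟨w, b, hw, (List.lex_append_singleton_iff hw).2 (.inl hlex),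
          M.eval_zip_append_singleton hw.symm a b⟩
      · exact ⟨u, b, rfl, (List.lex_append_singleton_iff rfl).2 (.inr ⟨rfl, hb⟩),
          M.eval_zip_append_singleton rfl a b⟩
    · rintro ⟨w, b, hw, hlex, rfl⟩
      rw [M.eval_zip_append_singleton hw.symm]
      rcases (List.lex_append_singleton_iff hw).1 hlex with hlex | ⟨rfl, hb⟩
      · exact .inl ⟨_, ⟨w, hw, hlex, rfl⟩, b, rfl⟩
      · exact .inr ⟨b, hb, rfl⟩

theorem mem_lexLeast_accepts {u : List A} : u ∈ M.lexLeast.accepts ↔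
    (∃ v, v.length = u.length ∧ u.zip v ∈ M.accepts) ∧
      ∀ w, w.length = u.length → List.Lex (· < ·) w u → u.zip w ∉ M.accepts := by
  rw [mem_accepts]
  change ((∃ s ∈ (M.lexLeast.eval u).2.1, s ∈ M.accept) ∧
    ∀ s ∈ (M.lexLeast.eval u).2.2, s ∉ M.accept) ↔ _
  simp only [lexLeast_eval_partners, lexLeast_eval_partnersBelow, Set.exists_mem_image,
    Set.forall_mem_image, Set.mem_ofPred_eq, mem_accepts, and_imp]

end DFA

theorem regular_lex_least_general (A : Type) [LinearOrder A]
    (Q : Language (A × A)) (hQ : Q.IsRegular) :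
    Language.IsRegular
      ({u : List A |
        (∃ v : List A, v.length = u.length ∧ u.zip v ∈ Q) ∧
        ∀ w : List A, w.length = u.length → u.zip w ∈ Q →
          u = w ∨ List.Lex (· < ·) u w} : Language A) := by
  obtain ⟨σ, _, M, rfl⟩ := hQ
  refine ⟨_, inferInstance, M.lexLeast, ?_⟩
  ext u
  simp only [DFA.mem_lexLeast_accepts, List.eq_or_lex_lt_iff_not_lex_lt, imp_not_comm]
  exact Iff.rfl

/-- For a regular language `Q` over `A × A` (viewed as pairs
of equal-length words over `A`), the language of words `u` which are paired
with some word by `Q` and are lexicographically least among all words they are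
paired with is regular. -/
theorem regular_lex_least (A : Type) [Fintype A] [LinearOrder A]
    (Q : Language (A × A)) (hQ : Q.IsRegular) :
    Language.IsRegular
      ({u : List A |
        (∃ v : List A, v.length = u.length ∧ u.zip v ∈ Q) ∧
        ∀ w : List A, w.length = u.length → u.zip w ∈ Q →
          u = w ∨ List.Lex (· < ·) u w} : Language A) :=
  regular_lex_least_general A Q hQ
end
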